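/- Let T be the three-legs spider tree with 7 vertices (center of degree 3, three paths of length 2 attached). Then for each k ∈ {0,1,2}, C_T^k ≤ 3, where C_T^k = inf_μ sup_v μ(B(v,2k+1))/μ(B(v,k)). In particular sup_k C_T^k ≤ 3 < C_T, so the least doubling constant can strictly exceed the supremum of the restricted constants. -/
import Mathlib

/-- The three-legs spider tree `T`: center `0` adjacent to `1, 2, 3`, and leaves
`4, 5, 6` adjacent to `1, 2, 3` respectively. -/
def threeLegsTree : SimpleGraph (Fin 7) :=
  SimpleGraph.fromRel (fun a b =>
    (a = 0 ∧ b = 1) ∨ (a = 0 ∧ b = 2) ∨ (a = 0 ∧ b = 3) ∨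
    (a = 1 ∧ b = 4) ∨ (a = 2 ∧ b = 5) ∨ (a = 3 ∧ b = 6))

/-- Closed ball of real radius `r` around `v` in the path metric of `threeLegsTree`. -/
noncomputable def tBall (v : Fin 7) (r : ℝ) : Finset (Fin 7) :=
  Finset.univ.filter (fun w => (threeLegsTree.dist v w : ℝ) ≤ r)

/-- The least doubling constant `C_T` of the three-legs tree. -/
noncomputable def CT : ℝ :=
  ⨅ μ : {f : Fin 7 → ℝ // ∀ v, 0 < f v},
    ⨆ v, ⨆ r : {r : ℝ // 0 ≤ r},
      (∑ w ∈ tBall v (2 * (r : ℝ)), μ.1 w) / (∑ w ∈ tBall v (r : ℝ), μ.1 w)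

/-- The restricted least doubling constant
`C_T^k = inf_μ sup_v μ(B(v,2k+1))/μ(B(v,k))` of the three-legs tree. -/
noncomputable def CTk (k : ℕ) : ℝ :=
  ⨅ μ : {f : Fin 7 → ℝ // ∀ v, 0 < f v},
    ⨆ v, (∑ w ∈ tBall v ((2 * k + 1 : ℕ) : ℝ), μ.1 w) / (∑ w ∈ tBall v ((k : ℕ) : ℝ), μ.1 w)

/-! ### Auxiliary: the distance matrix of the three-legs tree -/

instance : DecidableRel threeLegsTree.Adj := fun a b =>
  decidable_of_iff _ (SimpleGraph.fromRel_adj _ a b).symm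

/-- Explicit distance matrix of the three-legs tree. -/
def D : Fin 7 → Fin 7 → ℕ :=
  ![![0,1,1,1,2,2,2],
    ![1,0,2,2,1,3,3],
    ![1,2,0,2,3,1,3],
    ![1,2,2,0,3,3,1],
    ![2,1,3,3,0,4,4],
    ![2,3,1,3,4,0,4],
    ![2,3,3,1,4,4,0]]

lemma hD0 : ∀ u, D u u = 0 := by decide
lemma hLip : ∀ u v w, threeLegsTree.Adj u w → D u v ≤ D w v + 1 := by decide
lemma hStep : ∀ u v, u ≠ v → ∃ w, threeLegsTree.Adj u w ∧ D w v + 1 = D u v := by decide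
lemma hDzero : ∀ u v, D u v = 0 → u = v := by decide

lemma D_lower : ∀ (u v : Fin 7) (p : threeLegsTree.Walk u v), D u v ≤ p.length := by
  intro u v p
  induction p with
  | nil => simp [hD0]
  | @cons u w v h p ih =>
    calc D u v ≤ D w v + 1 := hLip u v w h
    _ ≤ p.length + 1 := by omega
    _ = (SimpleGraph.Walk.cons h p).length := (SimpleGraph.Walk.length_cons h p).symm

lemma exists_walk : ∀ (n : ℕ) (u v : Fin 7), D u v = n →
    ∃ p : threeLegsTree.Walk u v, p.length = n := by
  intro n
  induction n with
  | zero =>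
    intro u v h
    obtain rfl := hDzero u v h
    exact ⟨SimpleGraph.Walk.nil, rfl⟩
  | succ n ih =>
    intro u v h
    have hne : u ≠ v := by
      rintro rfl; rw [hD0] at h; omega
    obtain ⟨w, hadj, hw⟩ := hStep u v hne
    obtain ⟨p, hp⟩ := ih w v (by omega)
    exact ⟨SimpleGraph.Walk.cons hadj p, by simp [hp]⟩

lemma dist_eq (u v : Fin 7) : threeLegsTree.dist u v = D u v := by
  obtain ⟨p, hp⟩ := exists_walk (D u v) u v rfl
  refine le_antisymm (hp ▸ SimpleGraph.dist_le p) ?_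
  obtain ⟨q, hq⟩ :=
    SimpleGraph.Reachable.exists_walk_length_eq_dist (⟨p⟩ : threeLegsTree.Reachable u v)
  exact hq ▸ D_lower u v q

/-- Combinatorial (natural-radius) ball. -/
def B (v : Fin 7) (n : ℕ) : Finset (Fin 7) := Finset.univ.filter (fun w => D v w ≤ n)

lemma tBall_eq_B (v : Fin 7) (n : ℕ) (r : ℝ) (h1 : (n : ℝ) ≤ r) (h2 : r < n + 1) :
    tBall v r = B v n := by
  ext w
  simp only [tBall, B, Finset.mem_filter, Finset.mem_univ, true_and, dist_eq]
  constructor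
  · intro h
    by_contra hc
    push_neg at hc
    have : (n : ℝ) + 1 ≤ (D v w : ℝ) := by exact_mod_cast hc
    linarith
  · intro h
    have : (D v w : ℝ) ≤ (n : ℝ) := by exact_mod_cast h
    linarith

lemma v_mem_B (v : Fin 7) (n : ℕ) : v ∈ B v n := by
  simp [B, hD0]

lemma tBall_nat (v : Fin 7) (m : ℕ) : tBall v (m : ℝ) = B v m :=
  tBall_eq_B v m _ le_rfl (by linarith [lt_add_one (m : ℝ)])

/-! ### Upper bounds for the restricted constants -/

lemma ctk_le_of (k : ℕ) (μ : Fin 7 → ℝ) (hpos : ∀ v, 0 < μ v)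
    (h : ∀ v, ∑ w ∈ B v (2 * k + 1), μ w ≤ 3 * ∑ w ∈ B v k, μ w) : CTk k ≤ 3 := by
  refine ciInf_le_of_le ?_ ⟨μ, hpos⟩ ?_
  · refine ⟨0, ?_⟩
    rintro x ⟨ν, rfl⟩
    have h0 : (0 : ℝ) ≤ (∑ w ∈ tBall 0 ((2 * k + 1 : ℕ) : ℝ), ν.1 w) /
        (∑ w ∈ tBall 0 ((k : ℕ) : ℝ), ν.1 w) :=
      div_nonneg (Finset.sum_nonneg fun i _ => (ν.2 i).le)
        (Finset.sum_nonneg fun i _ => (ν.2 i).le)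
    refine le_trans h0 ?_
    exact le_ciSup (f := fun v : Fin 7 => (∑ w ∈ tBall v ((2 * k + 1 : ℕ) : ℝ), ν.1 w) /
      (∑ w ∈ tBall v ((k : ℕ) : ℝ), ν.1 w))
      (Set.Finite.bddAbove (Set.finite_range _)) (0 : Fin 7)
  · refine ciSup_le fun v => ?_
    rw [tBall_nat v (2 * k + 1), tBall_nat v k,
      div_le_iff₀ (Finset.sum_pos (fun i _ => hpos i) ⟨v, v_mem_B v k⟩)]
    exact h v

/-- The measure witnessing `C_T^0 ≤ 3` (natural-number values). -/
def mu0 : Fin 7 → ℕ := ![3,2,2,2,1,1,1]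

lemma ctk0 : CTk 0 ≤ 3 := by
  refine ctk_le_of 0 (fun v => (mu0 v : ℝ))
    (fun v => by exact_mod_cast Nat.cast_pos.mpr ((by decide : ∀ v, 0 < mu0 v) v)) (fun v => ?_)
  have hnat : ∀ v : Fin 7, ∑ w ∈ B v 1, mu0 w ≤ 3 * ∑ w ∈ B v 0, mu0 w := by decide
  have := hnat v
  push_cast [← Nat.cast_sum]
  exact_mod_cast this

lemma ctk1 : CTk 1 ≤ 3 := by
  refine ctk_le_of 1 (fun _ => 1) (fun _ => one_pos) (fun v => ?_)
  simp only [Finset.sum_const, nsmul_eq_mul, mul_one]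
  exact_mod_cast (by decide : ∀ v : Fin 7, (B v 3).card ≤ 3 * (B v 1).card) v

lemma ctk2 (n : ℕ) : CTk (n + 2) ≤ 3 := by
  refine ctk_le_of (n + 2) (fun _ => 1) (fun _ => one_pos) (fun v => ?_)
  simp only [Finset.sum_const, nsmul_eq_mul, mul_one]
  have h1 : (B v (2 * (n + 2) + 1)).card ≤ 7 := by
    have := Finset.card_le_univ (B v (2 * (n + 2) + 1))
    simpa using this
  have h2 : B v 2 ⊆ B v (n + 2) := by
    intro w hw
    simp only [B, Finset.mem_filter, Finset.mem_univ, true_and] at hw ⊢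
    omega
  have h3 : (B v 2).card ≤ (B v (n + 2)).card := Finset.card_le_card h2
  have h4 : 7 ≤ 3 * (B v 2).card := (by decide : ∀ v : Fin 7, 7 ≤ 3 * (B v 2).card) v
  exact_mod_cast (by omega : (B v (2 * (n + 2) + 1)).card ≤ 3 * (B v (n + 2)).card)

/-! ### Lower bound `76/25 ≤ C_T` -/

instance : Nonempty {f : Fin 7 → ℝ // ∀ v, 0 < f v} :=
  ⟨⟨fun _ => 1, fun _ => one_pos⟩⟩

lemma ct_ge : (76 / 25 : ℝ) ≤ CT := by
  refine le_ciInf ?_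
  rintro ⟨μ, hpos⟩
  have hBpos : ∀ (v : Fin 7) (n : ℕ), 0 < ∑ w ∈ B v n, μ w :=
    fun v n => Finset.sum_pos (fun i _ => hpos i) ⟨v, v_mem_B v n⟩
  set Tot : ℝ := ∑ w, μ w with hTotdef
  have hTot : 0 ≤ Tot := Finset.sum_nonneg fun i _ => (hpos i).le
  have hnum_le : ∀ (v : Fin 7) (r : ℝ), ∑ w ∈ tBall v r, μ w ≤ Tot := fun v r =>
    Finset.sum_le_sum_of_subset_of_nonneg (Finset.subset_univ _) (fun i _ _ => (hpos i).le)
  have hmem : ∀ (v : Fin 7) (r : ℝ), 0 ≤ r → v ∈ tBall v r := by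
    intro v r hr
    simp [tBall, SimpleGraph.dist_self, hr]
  have hden : ∀ (v : Fin 7) (r : ℝ), 0 ≤ r → μ v ≤ ∑ w ∈ tBall v r, μ w :=
    fun v r hr => Finset.single_le_sum (fun i _ => (hpos i).le) (hmem v r hr)
  have hub : ∀ (v : Fin 7) (r : {r : ℝ // 0 ≤ r}),
      (∑ w ∈ tBall v (2 * (r : ℝ)), μ w) / (∑ w ∈ tBall v (r : ℝ), μ w) ≤ Tot / μ v :=
    fun v r => div_le_div₀ hTot (hnum_le v _) (hpos v) (hden v _ r.2)
  have key : ∃ (v : Fin 7) (r : {r : ℝ // 0 ≤ r}), (76 / 25 : ℝ) ≤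
      (∑ w ∈ tBall v (2 * (r : ℝ)), μ w) / (∑ w ∈ tBall v (r : ℝ), μ w) := by
    by_contra hcon
    push_neg at hcon
    have hc' : ∀ (v : Fin 7) (m : ℕ),
        (∑ w ∈ B v (2 * m + 1), μ w) < (76 / 25) * ∑ w ∈ B v m, μ w := by
      intro v m
      have h : (∑ w ∈ tBall v (2 * ((m : ℝ) + 1/2)), μ w) /
          (∑ w ∈ tBall v ((m : ℝ) + 1/2), μ w) < 76 / 25 :=
        hcon v ⟨(m : ℝ) + 1/2, by positivity⟩
      rw [tBall_eq_B v m ((m : ℝ) + 1/2) (by norm_num) (by norm_num),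
        tBall_eq_B v (2 * m + 1) (2 * ((m : ℝ) + 1/2)) (by push_cast; linarith)
          (by push_cast; linarith)] at h
      exact (div_lt_iff₀ (hBpos v m)).mp h
    have e0 : ∀ v : Fin 7, B v 0 = {v} := by decide
    have hA := hc' 0 0
    have hB1 := hc' 1 0
    have hB2 := hc' 2 0
    have hB3 := hc' 3 0
    have hC1 := hc' 4 0
    have hC2 := hc' 5 0
    have hC3 := hc' 6 0
    have hE1 := hc' 4 1
    have hE2 := hc' 5 1
    have hE3 := hc' 6 1
    simp only [e0,
      show B 0 1 = ({0,1,2,3} : Finset (Fin 7)) from by decide,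
      show B 1 1 = ({0,1,4} : Finset (Fin 7)) from by decide,
      show B 2 1 = ({0,2,5} : Finset (Fin 7)) from by decide,
      show B 3 1 = ({0,3,6} : Finset (Fin 7)) from by decide,
      show B 4 1 = ({1,4} : Finset (Fin 7)) from by decide,
      show B 5 1 = ({2,5} : Finset (Fin 7)) from by decide,
      show B 6 1 = ({3,6} : Finset (Fin 7)) from by decide,
      show B 4 3 = ({0,1,2,3,4} : Finset (Fin 7)) from by decide,
      show B 5 3 = ({0,1,2,3,5} : Finset (Fin 7)) from by decide,
      show B 6 3 = ({0,1,2,3,6} : Finset (Fin 7)) from by decide]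
      at hA hB1 hB2 hB3 hC1 hC2 hC3 hE1 hE2 hE3
    simp [Finset.sum_insert, Finset.mem_insert, Finset.mem_singleton]
      at hA hB1 hB2 hB3 hC1 hC2 hC3 hE1 hE2 hE3
    linarith [hpos 0, hpos 1, hpos 2, hpos 3, hpos 4, hpos 5, hpos 6]
  obtain ⟨v₀, r₀, hkey⟩ := key
  have h2 : (∑ w ∈ tBall v₀ (2 * (r₀ : ℝ)), μ w) / (∑ w ∈ tBall v₀ (r₀ : ℝ), μ w) ≤
      ⨆ r : {r : ℝ // 0 ≤ r},
        (∑ w ∈ tBall v₀ (2 * (r : ℝ)), μ w) / (∑ w ∈ tBall v₀ (r : ℝ), μ w) :=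
    le_ciSup ⟨Tot / μ v₀, by rintro x ⟨r, rfl⟩; exact hub v₀ r⟩ r₀
  have h3 : (⨆ r : {r : ℝ // 0 ≤ r},
        (∑ w ∈ tBall v₀ (2 * (r : ℝ)), μ w) / (∑ w ∈ tBall v₀ (r : ℝ), μ w)) ≤
      ⨆ v, ⨆ r : {r : ℝ // 0 ≤ r},
        (∑ w ∈ tBall v (2 * (r : ℝ)), μ w) / (∑ w ∈ tBall v (r : ℝ), μ w) :=
    le_ciSup (f := fun v => ⨆ r : {r : ℝ // 0 ≤ r},
        (∑ w ∈ tBall v (2 * (r : ℝ)), μ w) / (∑ w ∈ tBall v (r : ℝ), μ w))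
      (Set.Finite.bddAbove (Set.finite_range _)) v₀
  exact le_trans hkey (le_trans h2 h3)

/-- each restricted constant `C_T^k ≤ 3` (in particular for
`k ∈ {0,1,2}`, hence `sup_k C_T^k ≤ 3`), while `3 < C_T`. -/
theorem stmt_16 : (∀ k : ℕ, CTk k ≤ 3) ∧ 3 < CT := by
  constructor
  · intro k
    match k with
    | 0 => exact ctk0
    | 1 => exact ctk1
    | (n + 2) => exact ctk2 n
  · exact lt_of_lt_of_le (by norm_num) ct_ge
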